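/- Assume the 2-point Chowla-type conjecture: for every A > 0 there is a constant C_A such that |Σ_{n ≤ x} μ(n+2) μ(n+1) exp(2πinα)| ≤ C_A x/(log x)^A holds for all x ≥ 2 uniformly in all real α. Then (1/x) Σ_{n ≤ x} (φ(n+3)/(n+3)) μ(n+2) μ(n+1) → 0 as x → ∞. -/

import Mathlib

/-!
Write `φ(m)/m = ∑_{d ∣ m} μ(d)/d` and swap the sums: the sum to be averaged becomes
`∑_{d ≤ x+3} (μ(d)/d) S_d(x)`, where `S_d(x)` sums `μ(n+2)μ(n+1)` over `n ≤ x` with `d ∣ n + 3`.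
For `d ≤ log x`, orthogonality of the additive characters modulo `d` expresses `S_d(x)` through
the exponential sums of the hypothesis at `α = k/d`, so `|S_d(x)| ≤ C x / log² x`; for
`d > log x` the trivial bound `|S_d(x)| ≤ (x + 3)/d` suffices since `∑_{d > D} 1/d² ≤ 2/D`.
Altogether the sum is `O(x / log x)`.
-/

open Filter

noncomputable section

/-- The 2-point Chowla type conjecture: for every `A > 0`,
`∑_{n ≤ x} μ(n+2) μ(n+1) exp(2πinα) = O(x / (log x)^A)` uniformly in `α`. -/
def TwoPointChowla : Prop :=
  ∀ A : ℝ, 0 < A → ∃ C : ℝ, ∀ x : ℝ, 2 ≤ x → ∀ α : ℝ,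
    ‖(∑ n ∈ Finset.Icc 1 ⌊x⌋₊,
        ((ArithmeticFunction.moebius (n + 2) : ℤ) : ℂ) *
          ((ArithmeticFunction.moebius (n + 1) : ℤ) : ℂ) *
          Complex.exp (2 * (Real.pi : ℂ) * Complex.I * (n : ℂ) * (α : ℂ)))‖ ≤
      C * x / Real.log x ^ A

open Finset
open scoped ArithmeticFunction.Moebius

theorem IsPrimitiveRoot.sum_range_pow_mul_eq_ite {R : Type*} [CommRing R] [IsDomain R] {ζ : R}
    {d : ℕ} (hζ : IsPrimitiveRoot ζ d) (m : ℕ) :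
    ∑ k ∈ range d, ζ ^ (m * k) = if d ∣ m then (d : R) else 0 := by
  simp_rw [pow_mul]
  split_ifs with hdm
  · simp [(hζ.pow_eq_one_iff_dvd m).2 hdm]
  · have hne : ζ ^ m ≠ 1 := mt (hζ.pow_eq_one_iff_dvd m).1 hdm
    refine eq_zero_of_ne_zero_of_mul_left_eq_zero (sub_ne_zero_of_ne hne.symm) ?_
    rw [mul_neg_geom_sum, ← pow_mul, mul_comm, pow_mul, hζ.pow_eq_one, one_pow, sub_self]

theorem IsPrimitiveRoot.natCast_mul_sum_filter_dvd_add {R : Type*} [CommRing R] [IsDomain R]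
    {ζ : R} {d : ℕ} (hζ : IsPrimitiveRoot ζ d) (s : Finset ℕ) (f : ℕ → R) (a : ℕ) :
    (d : R) * ∑ n ∈ s with d ∣ n + a, f n =
      ∑ k ∈ range d, ζ ^ (a * k) * ∑ n ∈ s, f n * ζ ^ (n * k) := by
  calc (d : R) * ∑ n ∈ s with d ∣ n + a, f n
      = ∑ n ∈ s, f n * ∑ k ∈ range d, ζ ^ ((n + a) * k) := by
        simp_rw [hζ.sum_range_pow_mul_eq_ite, mul_ite, mul_zero, sum_ite, sum_const_zero, add_zero,
          mul_sum, mul_comm]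
    _ = _ := by
        simp_rw [mul_sum, add_mul, pow_add]
        rw [sum_comm]
        refine sum_congr rfl fun k _ => sum_congr rfl fun n _ => by ring

theorem norm_sum_filter_dvd_add_le {s : Finset ℕ} {f : ℕ → ℂ} {B : ℝ}
    (hB : ∀ α : ℝ, ‖∑ n ∈ s, f n * Complex.exp (2 * Real.pi * Complex.I * n * α)‖ ≤ B)
    {d : ℕ} (hd : 0 < d) (a : ℕ) :
    ‖∑ n ∈ s with d ∣ n + a, f n‖ ≤ B := by
  set ζ := Complex.exp (2 * Real.pi * Complex.I / d)
  have hζ : IsPrimitiveRoot ζ d := Complex.isPrimitiveRoot_exp d hd.ne'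
  have hexp (n k : ℕ) :
      ζ ^ (n * k) = Complex.exp (2 * Real.pi * Complex.I * n * ((k / d : ℝ) : ℂ)) := by
    rw [← Complex.exp_nat_mul]
    push_cast
    field_simp
  have hmul : (d : ℝ) * ‖∑ n ∈ s with d ∣ n + a, f n‖ ≤ d * B :=
    calc (d : ℝ) * ‖∑ n ∈ s with d ∣ n + a, f n‖
        = ‖∑ k ∈ range d, ζ ^ (a * k) * ∑ n ∈ s, f n * ζ ^ (n * k)‖ := by
          rw [← hζ.natCast_mul_sum_filter_dvd_add, norm_mul, Complex.norm_natCast]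
      _ ≤ ∑ k ∈ range d, ‖ζ ^ (a * k) * ∑ n ∈ s, f n * ζ ^ (n * k)‖ := norm_sum_le _ _
      _ ≤ ∑ k ∈ range d, B := by
          refine sum_le_sum fun k _ => ?_
          rw [norm_mul, norm_pow, hζ.norm'_eq_one hd.ne', one_pow, one_mul]
          simpa only [hexp] using hB (k / d)
      _ = d * B := by rw [sum_const, card_range, nsmul_eq_mul]
  exact le_of_mul_le_mul_left hmul (by exact_mod_cast hd)

theorem Nat.totient_div_eq_sum_moebius_div {m : ℕ} (hm : 0 < m) :
    (Nat.totient m : ℝ) / m = ∑ d ∈ m.divisors, (μ d : ℝ) / d := by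
  have hinv : ∑ p ∈ m.divisorsAntidiagonal, (μ p.1 : ℝ) * p.2 = Nat.totient m := by
    refine (ArithmeticFunction.sum_eq_iff_sum_mul_moebius_eq (f := fun n => (Nat.totient n : ℝ))
      (g := fun n => (n : ℝ))).1 (fun n _ => ?_) m hm
    exact_mod_cast Nat.sum_totient n
  rw [← hinv, Nat.sum_divisorsAntidiagonal (f := fun d e => (μ d : ℝ) * e), sum_div]
  refine sum_congr rfl fun d hd => ?_
  rw [Nat.cast_div (Nat.dvd_of_mem_divisors hd)
    (by exact_mod_cast (Nat.pos_of_mem_divisors hd).ne')]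
  field_simp

theorem sum_Icc_sum_divisors_add_mul {R : Type*} [CommSemiring R] (N a : ℕ) (g f : ℕ → R) :
    ∑ n ∈ Icc 1 N, (∑ d ∈ (n + a).divisors, g d) * f n =
      ∑ d ∈ Icc 1 (N + a), g d * ∑ n ∈ Icc 1 N with d ∣ n + a, f n := by
  simp_rw [sum_mul, mul_sum]
  refine sum_comm' fun n d => ?_
  simp only [mem_Icc, Nat.mem_divisors, mem_filter]
  constructor
  · rintro ⟨hn, hdvd, -⟩
    have := Nat.le_of_dvd (by omega) hdvd
    exact ⟨⟨hn, hdvd⟩, Nat.pos_of_dvd_of_pos hdvd (by omega), by omega⟩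
  · rintro ⟨⟨hn, hdvd⟩, -⟩
    exact ⟨hn, hdvd, by omega⟩

theorem card_filter_dvd_add_le (N a d : ℕ) : #{n ∈ Icc 1 N | d ∣ n + a} ≤ (N + a) / d := by
  rw [← Nat.Ioc_filter_dvd_card_eq_div]
  refine card_le_card_of_injOn (· + a) (fun n hn => ?_) (add_left_injective a).injOn
  simp only [coe_filter, mem_Icc, mem_Ioc, Set.mem_ofPred_eq] at hn ⊢
  omega

theorem abs_sum_filter_dvd_add_le {f : ℕ → ℝ} (hf : ∀ n, |f n| ≤ 1) (N a d : ℕ) :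
    |∑ n ∈ Icc 1 N with d ∣ n + a, f n| ≤ (N + a : ℝ) / d :=
  calc |∑ n ∈ Icc 1 N with d ∣ n + a, f n|
      ≤ ∑ n ∈ Icc 1 N with d ∣ n + a, |f n| := abs_sum_le_sum_abs _ _
    _ ≤ #{n ∈ Icc 1 N | d ∣ n + a} := by simpa using sum_le_card_nsmul _ _ 1 fun n _ => hf n
    _ ≤ ((N + a) / d : ℕ) := by exact_mod_cast card_filter_dvd_add_le N a d
    _ ≤ (N + a : ℝ) / d := by exact_mod_cast Nat.cast_div_le

theorem abs_sum_mul_le_of_abs_le_of_abs_le_div {w S : ℕ → ℝ} {M D : ℕ} {B X : ℝ} (hD : 0 < D)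
    (hB : 0 ≤ B) (hX : 0 ≤ X) (hw : ∀ d ∈ Icc 1 M, |w d| ≤ 1 / d)
    (hsmall : ∀ d ∈ Icc 1 D, |S d| ≤ B) (hlarge : ∀ d ∈ Icc 1 M, |S d| ≤ X / d) :
    |∑ d ∈ Icc 1 M, w d * S d| ≤ D * B + 2 * X / D := by
  have hterm (d) (hd : d ∈ Icc 1 M) : |w d * S d| ≤ 1 / d * |S d| :=
    abs_mul (w d) (S d) ▸ mul_le_mul_of_nonneg_right (hw d hd) (abs_nonneg _)
  have hhead : ∑ d ∈ Icc 1 M with d ≤ D, |w d * S d| ≤ D * B :=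
    calc ∑ d ∈ Icc 1 M with d ≤ D, |w d * S d|
        ≤ ∑ d ∈ Icc 1 M with d ≤ D, B := by
          refine sum_le_sum fun d hd => ?_
          simp only [mem_filter, mem_Icc] at hd
          have h1d : 1 / (d : ℝ) ≤ 1 := by
            rw [div_le_one (by exact_mod_cast hd.1.1)]; exact_mod_cast hd.1.1
          calc |w d * S d| ≤ 1 / d * |S d| := hterm d (mem_Icc.2 hd.1)
            _ ≤ 1 * B :=
              mul_le_mul h1d (hsmall d (mem_Icc.2 ⟨hd.1.1, hd.2⟩)) (abs_nonneg _) zero_le_one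
            _ = B := one_mul B
      _ ≤ D * B := by
          rw [sum_const, nsmul_eq_mul]
          refine mul_le_mul_of_nonneg_right ?_ hB
          have : {d ∈ Icc 1 M | d ≤ D} ⊆ Icc 1 D := fun d hd => by
            simp only [mem_filter, mem_Icc] at hd ⊢; omega
          simpa using card_le_card this
  have htail : ∑ d ∈ Icc 1 M with ¬d ≤ D, |w d * S d| ≤ 2 * X / D :=
    calc ∑ d ∈ Icc 1 M with ¬d ≤ D, |w d * S d|
        ≤ ∑ d ∈ Icc 1 M with ¬d ≤ D, X * ((d : ℝ) ^ 2)⁻¹ := by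
          refine sum_le_sum fun d hd => ?_
          have hd' := (mem_filter.1 hd).1
          calc |w d * S d| ≤ 1 / d * (X / d) :=
                (hterm d hd').trans (mul_le_mul_of_nonneg_left (hlarge d hd') (by positivity))
            _ = X * ((d : ℝ) ^ 2)⁻¹ := by ring
      _ ≤ ∑ d ∈ Ioo D (M + 1), X * ((d : ℝ) ^ 2)⁻¹ := by
          refine sum_le_sum_of_subset_of_nonneg (fun d hd => ?_) fun _ _ _ => by positivity
          simp only [mem_filter, mem_Icc, mem_Ioo] at hd ⊢; omega
      _ ≤ X * (2 / (D + 1)) := by rw [← mul_sum]; gcongr; exact sum_Ioo_inv_sq_le D (M + 1)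
      _ ≤ 2 * X / D := by
          rw [mul_div_assoc', mul_comm X]
          gcongr
          linarith
  calc |∑ d ∈ Icc 1 M, w d * S d| ≤ ∑ d ∈ Icc 1 M, |w d * S d| := abs_sum_le_sum_abs _ _
    _ = ∑ d ∈ Icc 1 M with d ≤ D, |w d * S d| + ∑ d ∈ Icc 1 M with ¬d ≤ D, |w d * S d| :=
        (sum_filter_add_sum_filter_not _ _ _).symm
    _ ≤ D * B + 2 * X / D := add_le_add hhead htail

theorem abs_sum_totient_div_mul_le {f : ℕ → ℝ} (hf : ∀ n, |f n| ≤ 1) (N a : ℕ) {D : ℕ}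
    (hD : 0 < D) {B : ℝ} (hB : 0 ≤ B)
    (hS : ∀ d ∈ Icc 1 D, |∑ n ∈ Icc 1 N with d ∣ n + a, f n| ≤ B) :
    |∑ n ∈ Icc 1 N, (Nat.totient (n + a) : ℝ) / (n + a : ℕ) * f n| ≤ D * B + 2 * (N + a) / D := by
  have hsum : ∑ n ∈ Icc 1 N, (Nat.totient (n + a) : ℝ) / (n + a : ℕ) * f n =
      ∑ n ∈ Icc 1 N, (∑ d ∈ (n + a).divisors, (μ d : ℝ) / d) * f n :=
    sum_congr rfl fun n hn => by
      rw [Nat.totient_div_eq_sum_moebius_div (by simp only [mem_Icc] at hn; omega)]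
  rw [hsum, sum_Icc_sum_divisors_add_mul]
  refine abs_sum_mul_le_of_abs_le_of_abs_le_div hD hB (by positivity) (fun d _ => ?_) hS
    fun d _ => abs_sum_filter_dvd_add_le hf N a d
  rw [abs_div, Nat.abs_cast]
  gcongr
  exact_mod_cast ArithmeticFunction.abs_moebius_le_one

theorem norm_one_div_mul_sum_totient_moebius_le {C : ℝ}
    (hC : ∀ x : ℝ, 2 ≤ x → ∀ α : ℝ,
      ‖∑ n ∈ Icc 1 ⌊x⌋₊, ((μ (n + 2) : ℤ) : ℂ) * ((μ (n + 1) : ℤ) : ℂ) *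
          Complex.exp (2 * Real.pi * Complex.I * n * α)‖ ≤ C * x / Real.log x ^ (2 : ℝ))
    {x : ℝ} (hx : 3 ≤ x) :
    ‖1 / x * ∑ n ∈ Icc 1 ⌊x⌋₊,
        (Nat.totient (n + 3) : ℝ) / ((n : ℝ) + 3) * (μ (n + 2) : ℝ) * (μ (n + 1) : ℝ)‖ ≤
      (2 * C + 4) / Real.log x := by
  have hlog : 1 ≤ Real.log x := by
    rw [Real.le_log_iff_exp_le (by linarith)]
    linarith [Real.exp_one_lt_d9]
  set N := ⌊x⌋₊
  set D := ⌈Real.log x⌉₊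
  set B := C * x / Real.log x ^ (2 : ℝ)
  have hD : 0 < D := Nat.ceil_pos.2 (by linarith)
  have hB : 0 ≤ B := (norm_nonneg _).trans (hC x (by linarith) 0)
  have hS (d) (hd : d ∈ Icc 1 D) :
      |∑ n ∈ Icc 1 N with d ∣ n + 3, (μ (n + 2) : ℝ) * (μ (n + 1) : ℝ)| ≤ B := by
    rw [← Real.norm_eq_abs, ← Complex.norm_real]
    push_cast
    exact norm_sum_filter_dvd_add_le (hC x (by linarith)) (mem_Icc.1 hd).1 3
  have hf (n : ℕ) : |(μ (n + 2) : ℝ) * (μ (n + 1) : ℝ)| ≤ 1 := by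
    rw [abs_mul]
    exact mul_le_one₀ (by exact_mod_cast ArithmeticFunction.abs_moebius_le_one) (abs_nonneg _)
      (by exact_mod_cast ArithmeticFunction.abs_moebius_le_one)
  have hmain := abs_sum_totient_div_mul_le hf N 3 hD hB hS
  have hDle : (D : ℝ) ≤ 2 * Real.log x := by
    linarith [Nat.ceil_lt_add_one (by linarith : 0 ≤ Real.log x)]
  have hDge : Real.log x ≤ D := Nat.le_ceil _
  have hN : (N : ℝ) + 3 ≤ 2 * x := by linarith [Nat.floor_le (by linarith : 0 ≤ x)]
  have hsum : ∑ n ∈ Icc 1 N,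
        (Nat.totient (n + 3) : ℝ) / ((n : ℝ) + 3) * (μ (n + 2) : ℝ) * (μ (n + 1) : ℝ) =
      ∑ n ∈ Icc 1 N,
        (Nat.totient (n + 3) : ℝ) / (n + 3 : ℕ) * ((μ (n + 2) : ℝ) * (μ (n + 1) : ℝ)) :=
    sum_congr rfl fun n _ => by push_cast; ring
  rw [Real.norm_eq_abs, abs_mul, abs_of_pos (by positivity), hsum]
  calc 1 / x * |∑ n ∈ Icc 1 N,
          (Nat.totient (n + 3) : ℝ) / (n + 3 : ℕ) * ((μ (n + 2) : ℝ) * (μ (n + 1) : ℝ))|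
      ≤ 1 / x * (D * B + 2 * (N + 3) / D) := by
        gcongr
        exact_mod_cast hmain
    _ ≤ 1 / x * (2 * Real.log x * B + 2 * (2 * x) / Real.log x) := by
        gcongr
    _ = (2 * C + 4) / Real.log x := by
        simp only [B, Real.rpow_two]
        field_simp
        ring

theorem stmt_13 (hChowla : TwoPointChowla) :
    Tendsto (fun x : ℝ => (1 / x) *
        ∑ n ∈ Finset.Icc 1 ⌊x⌋₊,
          ((Nat.totient (n + 3) : ℝ) / ((n : ℝ) + 3)) *
            ((ArithmeticFunction.moebius (n + 2) : ℤ) : ℝ) *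
            ((ArithmeticFunction.moebius (n + 1) : ℤ) : ℝ))
      atTop (nhds 0) := by
  obtain ⟨C, hC⟩ := hChowla 2 two_pos
  refine squeeze_zero_norm' (a := fun x => (2 * C + 4) / Real.log x) ?_
    (tendsto_const_nhds.div_atTop Real.tendsto_log_atTop)
  filter_upwards [eventually_ge_atTop 3] with x hx
  exact norm_one_div_mul_sum_totient_moebius_le hC hx
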